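/- Let M and N be pointwise finite dimensional block decomposable ℝ^op×ℝ-indexed modules and fix direct sum decompositions M = M^o ⊕ M^co ⊕ M^oc ⊕ M^c and N = N^o ⊕ N^co ⊕ N^oc ⊕ N^c grouping the block summands by type. If (f,g) is an ε-interleaving pair between M and N, then for each type ⋆ ∈ {o, co, oc, c}, the pair (f^{⋆,⋆}, g^{⋆,⋆}) is an ε-interleaving pair between M^⋆ and N^⋆. In particular, f^{⋆,⋆} and g^{⋆,⋆} have 2ε-trivial kernel and cokernel. -/

import Mathlib

open scoped DirectSum ENNReal

namespace PersStab

/-- A persistence module indexed by a preordered set `P`, with values in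
`K`-vector spaces. -/
structure PersMod (K : Type) [Field K] (P : Type) [Preorder P] where
  V : P → Type
  [acg : ∀ a, AddCommGroup (V a)]
  [mod : ∀ a, Module K (V a)]
  map : ∀ {a b : P}, a ≤ b → (V a →ₗ[K] V b)
  map_id : ∀ a : P, map (le_refl a) = LinearMap.id
  map_comp : ∀ {a b c : P} (h₁ : a ≤ b) (h₂ : b ≤ c),
    map (h₁.trans h₂) = (map h₂).comp (map h₁)

attribute [instance] PersMod.acg PersMod.mod

variable {K : Type} [Field K] {P : Type} [Preorder P]

/-- Pointwise finite dimensional. -/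
def PersMod.pfd (M : PersMod K P) : Prop := ∀ a, FiniteDimensional K (M.V a)

/-- A morphism of persistence modules (a natural transformation). -/
structure PersHom (M N : PersMod K P) where
  app : ∀ a, M.V a →ₗ[K] N.V a
  natural : ∀ {a b : P} (h : a ≤ b), (app b).comp (M.map h) = (N.map h).comp (app a)

/-- An isomorphism of persistence modules. -/
structure PersIso (M N : PersMod K P) where
  e : ∀ a, M.V a ≃ₗ[K] N.V a
  natural : ∀ {a b : P} (h : a ≤ b) (m : M.V a), e b (M.map h m) = N.map h (e a m)

/-- Convexity: the second defining property of an interval in a poset. -/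
def IsConvexIn (J : Set P) : Prop :=
  ∀ ⦃a b c : P⦄, a ∈ J → c ∈ J → a ≤ b → b ≤ c → b ∈ J

/-- Connectivity: the third defining property of an interval in a poset:
any two points are joined by a finite zigzag of comparable points inside `J`. -/
def IsConnectedIn (J : Set P) : Prop :=
  ∀ a ∈ J, ∀ c ∈ J, ∃ (n : ℕ) (f : Fin (n + 1) → P),
    f 0 = a ∧ f (Fin.last n) = c ∧ (∀ k, f k ∈ J) ∧
    ∀ k : Fin n, f k.castSucc ≤ f k.succ ∨ f k.succ ≤ f k.castSucc

/-- An interval in a poset: nonempty, convex and connected. -/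
structure IsInterval (J : Set P) : Prop where
  nonempty : J.Nonempty
  convex : IsConvexIn J
  connected : IsConnectedIn J

-- The structure map of an interval module: the identity `K → K` if the source
-- lies in the interval, and `0` otherwise.
open Classical in
noncomputable def ivMap (K : Type) [Field K] (J : Set P) (a c : P) :
    (PLift (a ∈ J) → K) →ₗ[K] (PLift (c ∈ J) → K) where
  toFun v _ := if h : a ∈ J then v ⟨h⟩ else 0
  map_add' u v := by
    funext hc
    by_cases h : a ∈ J <;> simp [h]
  map_smul' r v := by
    funext hc
    by_cases h : a ∈ J <;> simp [h]

/-- The interval module `I^J` of a convex set `J`: one-dimensional (a copy of `K`)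
at points of `J`, zero elsewhere, with identity internal maps inside `J`. -/
noncomputable def intervalModule (K : Type) [Field K] (J : Set P) (hJ : IsConvexIn J) :
    PersMod K P where
  V a := PLift (a ∈ J) → K
  map {a c} _ := ivMap K J a c
  map_id a := by
    refine LinearMap.ext fun v => funext fun hc => ?_
    obtain ⟨hc⟩ := hc
    simp only [ivMap, LinearMap.coe_mk, AddHom.coe_mk, LinearMap.id_coe, id_eq]
    rw [dif_pos hc]
  map_comp {a b c} h₁ h₂ := by
    refine LinearMap.ext fun v => funext fun hc => ?_
    simp only [ivMap, LinearMap.coe_mk, AddHom.coe_mk, LinearMap.coe_comp,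
      Function.comp_apply]
    by_cases ha : a ∈ J
    · have hb : b ∈ J := hJ ha hc.down h₁ h₂
      simp [ha, hb]
    · simp [ha]

/-- A decomposition of the persistence module `M` as a direct sum of interval
modules `I^{B i}`, `i : ι`, where all the sets `B i` satisfy the predicate `pred`.
The multiset `{B i | i : ι}` is the barcode of `M`. -/
structure DecompOver (pred : Set P → Prop) (M : PersMod K P) where
  ι : Type
  B : ι → Set P
  mem : ∀ i, pred (B i)
  equiv : ∀ a : P, M.V a ≃ₗ[K] (Π₀ i : ι, (PLift (a ∈ B i) → K))
  natural : ∀ {a c : P} (h : a ≤ c) (m : M.V a),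
    equiv c (M.map h m) =
      DFinsupp.mapRange.linearMap (fun i => ivMap K (B i) a c) (equiv a m)

/-- A matching between two multisets, presented as indexed families: a bijection
between a subset (the coimage) of the index set `ι` and a subset (the image) of
the index set `κ`. -/
structure Matching (ι κ : Type) : Type where
  R : ι → κ → Prop
  functional : ∀ {i j j'}, R i j → R i j' → j = j'
  injective : ∀ {i i' j}, R i j → R i' j → i = i'

section Shift

variable (sh : ℝ → P → P)

/-- `M` is `δ`-trivial (with respect to the shift `sh`): all internal maps
from `p` to the `δ`-shift of `p` vanish. -/
def ETrivial (M : PersMod K P) (δ : ℝ) : Prop :=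
  ∀ (p : P) (h : p ≤ sh δ p), M.map h = 0

/-- The data `(f, g)` is an `ε`-interleaving between `M` and `N`:
`f : M → N(ε)` and `g : N → M(ε)` are natural, and the two composites agree with
the `2ε`-shift morphisms of `M` and `N`. -/
structure IsInterleaving (ε : ℝ) (M N : PersMod K P)
    (f : ∀ p, M.V p →ₗ[K] N.V (sh ε p)) (g : ∀ p, N.V p →ₗ[K] M.V (sh ε p)) : Prop where
  nat_f : ∀ {p q : P} (h : p ≤ q) (h' : sh ε p ≤ sh ε q),
    (f q).comp (M.map h) = (N.map h').comp (f p)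
  nat_g : ∀ {p q : P} (h : p ≤ q) (h' : sh ε p ≤ sh ε q),
    (g q).comp (N.map h) = (M.map h').comp (g p)
  gf : ∀ (p : P) (h : p ≤ sh ε (sh ε p)), (g (sh ε p)).comp (f p) = M.map h
  fg : ∀ (p : P) (h : p ≤ sh ε (sh ε p)), (f (sh ε p)).comp (g p) = N.map h

/-- `M` and `N` are `ε`-interleaved. -/
def Interleaved (ε : ℝ) (M N : PersMod K P) : Prop :=
  0 ≤ ε ∧ ∃ f g, IsInterleaving sh ε M N f g

/-- The interleaving distance, valued in `ℝ≥0∞`. -/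
noncomputable def dI (M N : PersMod K P) : ℝ≥0∞ :=
  ⨅ ε : {e : ℝ // Interleaved sh e M N}, ENNReal.ofReal ε.1

/-- `σ` is an `ε`-matching between the barcodes `{A i}` and `{C j}`:
every interval of either barcode which is not `2ε`-trivial is matched, and
matched intervals have `ε`-interleaved interval modules. -/
def IsEpsMatching (K : Type) [Field K] (ε : ℝ) {ι κ : Type}
    (A : ι → Set P) (hA : ∀ i, IsConvexIn (A i))
    (C : κ → Set P) (hC : ∀ j, IsConvexIn (C j)) (σ : Matching ι κ) : Prop :=
  (∀ i, ¬ ETrivial sh (intervalModule K (A i) (hA i)) (2 * ε) → ∃ j, σ.R i j) ∧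
  (∀ j, ¬ ETrivial sh (intervalModule K (C j) (hC j)) (2 * ε) → ∃ i, σ.R i j) ∧
  (∀ i j, σ.R i j →
    Interleaved sh ε (intervalModule K (A i) (hA i)) (intervalModule K (C j) (hC j)))

/-- The bottleneck distance between two barcodes, valued in `ℝ≥0∞`. -/
noncomputable def dB (K : Type) [Field K] {ι κ : Type}
    (A : ι → Set P) (hA : ∀ i, IsConvexIn (A i))
    (C : κ → Set P) (hC : ∀ j, IsConvexIn (C j)) : ℝ≥0∞ :=
  ⨅ e : {e : ℝ // 0 ≤ e ∧ ∃ σ : Matching ι κ, IsEpsMatching sh K e A hA C hC σ},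
    ENNReal.ofReal e.1

end Shift

end PersStab
namespace PersStab

/-! ### The poset `ℝᵒᵖ × ℝ` and blocks -/

/-- The poset `ℝᵒᵖ × ℝ`: `(a, b) ≤ (c, d)` iff `c ≤ a` and `b ≤ d`. -/
structure RopR where
  x : ℝ
  y : ℝ

instance : Preorder RopR where
  le p q := q.x ≤ p.x ∧ p.y ≤ q.y
  le_refl p := ⟨le_rfl, le_rfl⟩
  le_trans p q r h₁ h₂ := ⟨h₂.1.trans h₁.1, h₁.2.trans h₂.2⟩

lemma RopR.le_def {p q : RopR} : p ≤ q ↔ q.x ≤ p.x ∧ p.y ≤ q.y := Iff.rfl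

/-- The `ε`-shift on the poset `ℝᵒᵖ × ℝ`: `(a, b) ↦ (a - ε, b + ε)`. -/
def shf (ε : ℝ) (p : RopR) : RopR := ⟨p.x - ε, p.y + ε⟩

/-- The block `(a,b)_BL = {(x,y) ∈ U : a < x, y < b}` (with `a`, `b` finite;
for infinite endpoints this shape is of type co, oc or c). -/
def blkO (a b : ℝ) : Set RopR := {p | p.x ≤ p.y ∧ a < p.x ∧ p.y < b}

/-- The blocks `[a,b)_BL = {(x,y) ∈ U : a ≤ y < b}` (for `s = a` finite) and
`(-∞,b)_BL = {(x,y) ∈ U : y < b}` (for `s = ⊥`). -/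
def blkCO (s : EReal) (b : ℝ) : Set RopR := {p | p.x ≤ p.y ∧ s ≤ (p.y : EReal) ∧ p.y < b}

/-- The blocks `(a,b]_BL = {(x,y) ∈ U : a < x ≤ b}` (for `t = b` finite) and
`(a,∞)_BL = {(x,y) ∈ U : a < x}` (for `t = ⊤`). -/
def blkOC (a : ℝ) (t : EReal) : Set RopR := {p | p.x ≤ p.y ∧ a < p.x ∧ (p.x : EReal) ≤ t}

/-- The closed blocks `{(x,y) ∈ U : x ≤ t, s ≤ y}`: this includes `[a,b]_BL`
(`s = a ≤ t = b` finite), `[b,a]_BL` (`t = a < s = b` finite), `[a,∞)_BL` (`t = ⊤`),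
`(-∞,b]_BL` (`s = ⊥`) and `(-∞,∞)_BL = U`. -/
def blkC (s t : EReal) : Set RopR := {p | p.x ≤ p.y ∧ (p.x : EReal) ≤ t ∧ s ≤ (p.y : EReal)}

/-- The four types of blocks. -/
inductive BlockType : Type
  | o | co | oc | c
deriving DecidableEq

/-- The blocks of each type. -/
def IsBlockOfType : BlockType → Set RopR → Prop
  | .o, J => ∃ a b : ℝ, a < b ∧ J = blkO a b
  | .co, J => ∃ (s : EReal) (b : ℝ), s ≠ ⊤ ∧ s < (b : EReal) ∧ J = blkCO s b
  | .oc, J => ∃ (a : ℝ) (t : EReal), t ≠ ⊥ ∧ (a : EReal) < t ∧ J = blkOC a t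
  | .c, J => ∃ s t : EReal, s ≠ ⊤ ∧ t ≠ ⊥ ∧ J = blkC s t

/-- A block: an interval of `U ⊆ ℝᵒᵖ × ℝ` of one of the five standard shapes. -/
def IsBlock (J : Set RopR) : Prop := ∃ τ, IsBlockOfType τ J

lemma blkO_convex (a b : ℝ) : IsConvexIn (blkO a b) := by
  rintro p q r ⟨hp1, hp2, hp3⟩ ⟨hr1, hr2, hr3⟩ ⟨hpq1, hpq2⟩ ⟨hqr1, hqr2⟩
  exact ⟨by linarith, by linarith, by linarith⟩

lemma blkCO_convex (s : EReal) (b : ℝ) : IsConvexIn (blkCO s b) := by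
  rintro p q r ⟨hp1, hp2, hp3⟩ ⟨hr1, hr2, hr3⟩ ⟨hpq1, hpq2⟩ ⟨hqr1, hqr2⟩
  refine ⟨by linarith, hp2.trans ?_, by linarith⟩
  exact_mod_cast hpq2

lemma blkOC_convex (a : ℝ) (t : EReal) : IsConvexIn (blkOC a t) := by
  rintro p q r ⟨hp1, hp2, hp3⟩ ⟨hr1, hr2, hr3⟩ ⟨hpq1, hpq2⟩ ⟨hqr1, hqr2⟩
  refine ⟨by linarith, by linarith, le_trans ?_ hp3⟩
  exact_mod_cast hpq1

lemma blkC_convex (s t : EReal) : IsConvexIn (blkC s t) := by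
  rintro p q r ⟨hp1, hp2, hp3⟩ ⟨hr1, hr2, hr3⟩ ⟨hpq1, hpq2⟩ ⟨hqr1, hqr2⟩
  refine ⟨by linarith, le_trans ?_ hp2, hp3.trans ?_⟩
  · exact_mod_cast hpq1
  · exact_mod_cast hpq2

lemma IsBlockOfType.convex {τ : BlockType} {J : Set RopR} (h : IsBlockOfType τ J) :
    IsConvexIn J := by
  cases τ with
  | o => obtain ⟨a, b, -, rfl⟩ := h; exact blkO_convex a b
  | co => obtain ⟨s, b, -, -, rfl⟩ := h; exact blkCO_convex s b
  | oc => obtain ⟨a, t, -, -, rfl⟩ := h; exact blkOC_convex a t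
  | c => obtain ⟨s, t, -, -, rfl⟩ := h; exact blkC_convex s t

lemma IsBlock.convex {J : Set RopR} (h : IsBlock J) : IsConvexIn J :=
  h.choose_spec.convex

end PersStab
namespace PersStab

variable {K : Type} [Field K] {P : Type} [Preorder P]

section
variable (sh : ℝ → P → P)

/-- The kernel of a morphism `f : M → N(ε)` is `δ`-trivial. -/
def KerTrivialSh (ε δ : ℝ) (M N : PersMod K P)
    (f : ∀ p, M.V p →ₗ[K] N.V (sh ε p)) : Prop :=
  ∀ (p : P) (h : p ≤ sh δ p) (m : M.V p), f p m = 0 → M.map h m = 0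

/-- The cokernel of a morphism `f : M → N(ε)` is `δ`-trivial. -/
def CokerTrivialSh (ε δ : ℝ) (M N : PersMod K P)
    (f : ∀ p, M.V p →ₗ[K] N.V (sh ε p)) : Prop :=
  ∀ (p : P) (h' : sh ε p ≤ sh ε (sh δ p)) (n : N.V (sh ε p)),
    ∃ m : M.V (sh δ p), f (sh δ p) m = N.map h' n

/-- The kernel of a plain morphism `f : M → N` is `δ`-trivial. -/
def KerTrivial (δ : ℝ) {M N : PersMod K P} (f : PersHom M N) : Prop :=
  ∀ (p : P) (h : p ≤ sh δ p) (m : M.V p), f.app p m = 0 → M.map h m = 0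

/-- The cokernel of a plain morphism `f : M → N` is `δ`-trivial. -/
def CokerTrivial (δ : ℝ) {M N : PersMod K P} (f : PersHom M N) : Prop :=
  ∀ (p : P) (h : p ≤ sh δ p) (n : N.V p),
    ∃ m : M.V (sh δ p), f.app (sh δ p) m = N.map h n

end

end PersStab
namespace PersStab

variable {K : Type} [Field K] {P : Type} [Preorder P]

/-- The direct sum of a finite family of persistence modules indexed by the
four block types. -/
noncomputable def piMod (Mf : BlockType → PersMod K P) : PersMod K P where
  V a := ∀ τ : BlockType, (Mf τ).V a
  map h := LinearMap.pi fun τ => ((Mf τ).map h).comp (LinearMap.proj τ)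
  map_id a := by
    refine LinearMap.ext fun m => funext fun τ => ?_
    simp [(Mf τ).map_id]
  map_comp h₁ h₂ := by
    refine LinearMap.ext fun m => funext fun τ => ?_
    simp [(Mf τ).map_comp h₁ h₂]

/-- The component `h^{⋆,†}` of a (shifted) morphism between direct sums indexed by
block types: precompose with the inclusion of the `⋆`-summand, postcompose with the
projection onto the `†`-summand. -/
noncomputable def comp2 {sh : ℝ → P → P} {ε : ℝ} (Mf Nf : BlockType → PersMod K P)
    (f : ∀ p, (piMod Mf).V p →ₗ[K] (piMod Nf).V (sh ε p)) (τ τ' : BlockType) :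
    ∀ p, (Mf τ).V p →ₗ[K] (Nf τ').V (sh ε p) := fun p =>
  (LinearMap.proj τ').comp ((f p).comp (LinearMap.single K (fun σ => (Mf σ).V p) τ))

/-! A block of type o is bounded on the left (`a < x`) and above (`y < b`), one of type co only
above, one of type oc only on the left, one of type c on neither side; on a side where a block is
unbounded it is closed under moving outwards. If `B` is bounded on a side where `C` is unbounded,
every natural map `I^B → I^C(ε)` vanishes: from `p ∈ B` one moves out of `B` in that direction while
staying in `C(ε)`, and naturality forces the map to be zero at `p`. Two different types differ on
some side, so for `σ ≠ τ` every round trip `I^B → I^C(ε) → I^{B'}(2ε)` through a block of type `σ`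
has a vanishing leg. Expanding `g ∘ f` and `f ∘ g` in the block decompositions, the summands of
type `τ` only see `g^{τ,τ} ∘ f^{τ,τ}` and `f^{τ,τ} ∘ g^{τ,τ}`, and an interleaving always has
`2ε`-trivial kernel and cokernel. -/

def IsNatural (sh : ℝ → P → P) (ε : ℝ) (M N : PersMod K P) (f : ∀ p, M.V p →ₗ[K] N.V (sh ε p)) :
    Prop :=
  ∀ {p q : P} (h : p ≤ q) (h' : sh ε p ≤ sh ε q), f q ∘ₗ M.map h = N.map h' ∘ₗ f p

section IntervalModules

lemma eq_zero_of_not_mem {X : Type} {J : Set X} {a : X} (ha : a ∉ J) (v : PLift (a ∈ J) → K) :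
    v = 0 :=
  funext fun h => absurd h.down ha

lemma ivMap_apply_of_mem {X : Type} {J : Set X} {a c : X} (ha : a ∈ J) (v : PLift (a ∈ J) → K)
    (hc : PLift (c ∈ J)) : ivMap K J a c v hc = v ⟨ha⟩ := by
  simp [ivMap, ha]

theorem ivHom_eq_zero_of_escape {B C : Set P} {s : P → P}
    (u : ∀ p, (PLift (p ∈ B) → K) →ₗ[K] (PLift (s p ∈ C) → K))
    (hu : ∀ {p q}, p ≤ q → u q ∘ₗ ivMap K B p q = ivMap K C (s p) (s q) ∘ₗ u p) {p : P}
    (hp : p ∈ B → s p ∈ C → ∃ r, p ≤ r ∧ s r ∈ C ∧ r ∉ B) : u p = 0 := by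
  refine LinearMap.ext fun m => funext fun ⟨hpC⟩ => ?_
  by_cases hpB : p ∈ B
  · obtain ⟨r, hpr, hrC, hrB⟩ := hp hpB hpC
    have hnat := congr_fun (LinearMap.congr_fun (hu hpr) m) ⟨hrC⟩
    rw [LinearMap.comp_apply, eq_zero_of_not_mem hrB (ivMap K B p r m), map_zero,
      LinearMap.comp_apply, ivMap_apply_of_mem hpC] at hnat
    exact hnat.symm
  · rw [eq_zero_of_not_mem hpB m, map_zero]
    rfl

end IntervalModules

section Entries

variable {R : Type*} [Semiring R] {X Y Z : Type*} [AddCommMonoid X] [Module R X]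
  [AddCommMonoid Y] [Module R Y] [AddCommMonoid Z] [Module R Z]
  {ι κ μ : Type*} [DecidableEq ι]
  {A : ι → Type*} {B : κ → Type*} {C : μ → Type*}
  [∀ i, AddCommMonoid (A i)] [∀ i, Module R (A i)] [∀ j, AddCommMonoid (B j)]
  [∀ j, Module R (B j)] [∀ k, AddCommMonoid (C k)] [∀ k, Module R (C k)]

def linearEntry (eX : X ≃ₗ[R] Π₀ i, A i) (eY : Y ≃ₗ[R] Π₀ j, B j) (u : X →ₗ[R] Y) (i : ι) (j : κ) :
    A i →ₗ[R] B j :=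
  DFinsupp.lapply j ∘ₗ eY.toLinearMap ∘ₗ u ∘ₗ eX.symm.toLinearMap ∘ₗ DFinsupp.lsingle i

lemma linearEntry_apply (eX : X ≃ₗ[R] Π₀ i, A i) (eY : Y ≃ₗ[R] Π₀ j, B j) (u : X →ₗ[R] Y)
    (i : ι) (j : κ) (a : A i) :
    linearEntry eX eY u i j a = eY (u (eX.symm (DFinsupp.single i a))) j := rfl

/-- The `(i, k)` entry of `v ∘ u` is `∑ j, v_{jk} ∘ u_{ij}`. -/
theorem comp_eq_zero_of_linearEntry_comp_eq_zero [DecidableEq κ] (eX : X ≃ₗ[R] Π₀ i, A i)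
    (eY : Y ≃ₗ[R] Π₀ j, B j) (eZ : Z ≃ₗ[R] Π₀ k, C k) {u : X →ₗ[R] Y} {v : Y →ₗ[R] Z}
    (h : ∀ i j k, linearEntry eY eZ v j k ∘ₗ linearEntry eX eY u i j = 0) : v ∘ₗ u = 0 := by
  classical
  suffices hsingle : ∀ i (a : A i), eZ (v (u (eX.symm (DFinsupp.single i a)))) = 0 by
    refine LinearMap.ext fun x => eZ.injective ?_
    rw [← eX.symm_apply_apply x, ← DFinsupp.sum_single (f := eX x)]
    simp only [LinearMap.comp_apply, map_dfinsuppSum, hsingle, DFinsupp.sum_zero,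
      LinearMap.zero_apply, map_zero]
  intro i a
  set w := eY (u (eX.symm (DFinsupp.single i a)))
  have hu : u (eX.symm (DFinsupp.single i a)) = eY.symm (w.sum DFinsupp.single) := by
    rw [DFinsupp.sum_single, LinearEquiv.symm_apply_apply]
  refine DFinsupp.ext fun k => ?_
  rw [hu, map_dfinsuppSum, map_dfinsuppSum, map_dfinsuppSum, DFinsupp.sum_apply,
    DFinsupp.zero_apply]
  refine Finset.sum_eq_zero fun j _ => ?_
  exact LinearMap.congr_fun (h i j k) a

end Entries

section Decompositions

variable {pr₁ pr₂ : Set P → Prop} {M N : PersMod K P}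

theorem DecompOver.linearEntry_comp_ivMap (DM : DecompOver pr₁ M) (DN : DecompOver pr₂ N)
    [DecidableEq DM.ι] [DecidableEq DN.ι] {p q p' q' : P} (h : p ≤ q) (h' : p' ≤ q')
    {u : M.V p →ₗ[K] N.V p'} {u' : M.V q →ₗ[K] N.V q'} (hu : u' ∘ₗ M.map h = N.map h' ∘ₗ u)
    (i : DM.ι) (j : DN.ι) :
    linearEntry (DM.equiv q) (DN.equiv q') u' i j ∘ₗ ivMap K (DM.B i) p q =
      ivMap K (DN.B j) p' q' ∘ₗ linearEntry (DM.equiv p) (DN.equiv p') u i j := by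
  refine LinearMap.ext fun z => ?_
  have hsingle : (DM.equiv q).symm (DFinsupp.single i (ivMap K (DM.B i) p q z)) =
      M.map h ((DM.equiv p).symm (DFinsupp.single i z)) := by
    rw [LinearEquiv.symm_apply_eq, DM.natural h, LinearEquiv.apply_symm_apply,
      DFinsupp.mapRange.linearMap_apply, DFinsupp.mapRange_single]
  rw [LinearMap.comp_apply, LinearMap.comp_apply, linearEntry_apply, linearEntry_apply, hsingle,
    ← LinearMap.comp_apply u', hu, LinearMap.comp_apply, DN.natural h',
    DFinsupp.mapRange.linearMap_apply, DFinsupp.mapRange_apply]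

end Decompositions

section Components

variable {sh : ℝ → P → P} {ε : ℝ} {Mf Nf : BlockType → PersMod K P}

instance : Fintype BlockType := ⟨{.o, .co, .oc, .c}, fun τ => by cases τ <;> decide⟩

def piSingle (Mf : BlockType → PersMod K P) (τ : BlockType) (p : P) :
    (Mf τ).V p →ₗ[K] (piMod Mf).V p :=
  LinearMap.single K (fun σ => (Mf σ).V p) τ

def piProj (Mf : BlockType → PersMod K P) (τ : BlockType) (p : P) :
    (piMod Mf).V p →ₗ[K] (Mf τ).V p :=
  LinearMap.proj τ

lemma piProj_comp_piSingle_self (τ : BlockType) (p : P) :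
    piProj Mf τ p ∘ₗ piSingle Mf τ p = LinearMap.id :=
  LinearMap.proj_comp_single_same K _ τ

lemma sum_piSingle_piProj (p : P) (x : (piMod Mf).V p) :
    ∑ σ, piSingle Mf σ p (piProj Mf σ p x) = x :=
  Finset.univ_sum_single x

lemma piMod_map_comp_piSingle {p q : P} (h : p ≤ q) (τ : BlockType) :
    (piMod Mf).map h ∘ₗ piSingle Mf τ p = piSingle Mf τ q ∘ₗ (Mf τ).map h :=
  LinearMap.ext fun m => funext fun σ => Pi.apply_single (fun σ => (Mf σ).map h)
    (fun _ => map_zero _) τ m σ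

lemma piProj_comp_piMod_map {p q : P} (h : p ≤ q) (τ : BlockType) :
    piProj Mf τ q ∘ₗ (piMod Mf).map h = (Mf τ).map h ∘ₗ piProj Mf τ p := rfl

lemma IsNatural.component {f : ∀ p, (piMod Mf).V p →ₗ[K] (piMod Nf).V (sh ε p)}
    (hf : IsNatural sh ε (piMod Mf) (piMod Nf) f) (τ τ' : BlockType) :
    IsNatural sh ε (Mf τ) (Nf τ') (comp2 Mf Nf f τ τ') := by
  intro p q h h'
  calc comp2 Mf Nf f τ τ' q ∘ₗ (Mf τ).map h
      = piProj Nf τ' _ ∘ₗ (f q ∘ₗ (piMod Mf).map h) ∘ₗ piSingle Mf τ p := by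
        rw [LinearMap.comp_assoc, piMod_map_comp_piSingle]
        rfl
    _ = (piProj Nf τ' _ ∘ₗ (piMod Nf).map h') ∘ₗ f p ∘ₗ piSingle Mf τ p := by
        rw [hf h h']
        rfl
    _ = (Nf τ').map h' ∘ₗ comp2 Mf Nf f τ τ' p := by
        rw [piProj_comp_piMod_map]
        rfl

lemma piProj_comp_comp_piSingle (f : ∀ p, (piMod Mf).V p →ₗ[K] (piMod Nf).V (sh ε p))
    (g : ∀ p, (piMod Nf).V p →ₗ[K] (piMod Mf).V (sh ε p)) (τ τ' : BlockType) (p : P) :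
    piProj Mf τ' _ ∘ₗ g (sh ε p) ∘ₗ f p ∘ₗ piSingle Mf τ p =
      ∑ σ, comp2 Nf Mf g σ τ' (sh ε p) ∘ₗ comp2 Mf Nf f τ σ p := by
  refine LinearMap.ext fun m => ?_
  rw [LinearMap.sum_apply]
  conv_lhs => rw [LinearMap.comp_apply, LinearMap.comp_apply, LinearMap.comp_apply,
    ← sum_piSingle_piProj _ (f p _), map_sum, map_sum]
  rfl

lemma comp2_comp_comp2_eq_map {f : ∀ p, (piMod Mf).V p →ₗ[K] (piMod Nf).V (sh ε p)}
    {g : ∀ p, (piMod Nf).V p →ₗ[K] (piMod Mf).V (sh ε p)} {τ : BlockType} {p : P}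
    {h : p ≤ sh ε (sh ε p)} (hgf : g (sh ε p) ∘ₗ f p = (piMod Mf).map h)
    (hcross : ∀ σ ≠ τ, comp2 Nf Mf g σ τ (sh ε p) ∘ₗ comp2 Mf Nf f τ σ p = 0) :
    comp2 Nf Mf g τ τ (sh ε p) ∘ₗ comp2 Mf Nf f τ τ p = (Mf τ).map h := by
  have hτ := piProj_comp_comp_piSingle f g τ τ p
  rw [Fintype.sum_eq_single τ hcross, ← LinearMap.comp_assoc (piSingle Mf τ p) (f p),
    hgf, piMod_map_comp_piSingle, ← LinearMap.comp_assoc, piProj_comp_piSingle_self,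
    LinearMap.id_comp] at hτ
  exact hτ.symm

theorem IsInterleaving.component {f : ∀ p, (piMod Mf).V p →ₗ[K] (piMod Nf).V (sh ε p)}
    {g : ∀ p, (piMod Nf).V p →ₗ[K] (piMod Mf).V (sh ε p)}
    (H : IsInterleaving sh ε (piMod Mf) (piMod Nf) f g) (τ : BlockType)
    (hgf : ∀ σ ≠ τ, ∀ p, comp2 Nf Mf g σ τ (sh ε p) ∘ₗ comp2 Mf Nf f τ σ p = 0)
    (hfg : ∀ σ ≠ τ, ∀ p, comp2 Mf Nf f σ τ (sh ε p) ∘ₗ comp2 Nf Mf g τ σ p = 0) :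
    IsInterleaving sh ε (Mf τ) (Nf τ) (comp2 Mf Nf f τ τ) (comp2 Nf Mf g τ τ) where
  nat_f := IsNatural.component H.nat_f τ τ
  nat_g := IsNatural.component H.nat_g τ τ
  gf p h := comp2_comp_comp2_eq_map (H.gf p h) fun σ hσ => hgf σ hσ p
  fg p h := comp2_comp_comp2_eq_map (H.fg p h) fun σ hσ => hfg σ hσ p

end Components

lemma IsInterleaving.symm {sh : ℝ → P → P} {ε : ℝ} {M N : PersMod K P}
    {f : ∀ p, M.V p →ₗ[K] N.V (sh ε p)} {g : ∀ p, N.V p →ₗ[K] M.V (sh ε p)}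
    (H : IsInterleaving sh ε M N f g) : IsInterleaving sh ε N M g f :=
  ⟨H.nat_g, H.nat_f, H.fg, H.gf⟩

section Shift

lemma shf_mono {ε : ℝ} {p q : RopR} (h : p ≤ q) : shf ε p ≤ shf ε q :=
  ⟨by simp only [shf]; linarith [h.1], by simp only [shf]; linarith [h.2]⟩

lemma shf_shf (a b : ℝ) (p : RopR) : shf a (shf b p) = shf (b + a) p := by
  simp only [shf, RopR.mk.injEq]
  constructor <;> ring

variable {ε : ℝ} {M N : PersMod K RopR} {f : ∀ p, M.V p →ₗ[K] N.V (shf ε p)}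
  {g : ∀ p, N.V p →ₗ[K] M.V (shf ε p)}

theorem IsInterleaving.kerTrivialSh (H : IsInterleaving shf ε M N f g) :
    KerTrivialSh shf ε (2 * ε) M N f := by
  intro p h m hm
  have h₁ : p ≤ shf ε (shf ε p) := by rwa [shf_shf, ← two_mul]
  have h₂ : shf ε (shf ε p) ≤ shf (2 * ε) p := by rw [shf_shf, ← two_mul]
  rw [show M.map h = M.map h₂ ∘ₗ M.map h₁ from M.map_comp h₁ h₂, ← H.gf p h₁,
    LinearMap.comp_apply, LinearMap.comp_apply, hm, map_zero, map_zero]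

theorem IsInterleaving.cokerTrivialSh (H : IsInterleaving shf ε M N f g) :
    CokerTrivialSh shf ε (2 * ε) M N f := by
  intro p h n
  have h₁ : shf ε p ≤ shf ε (shf ε (shf ε p)) := by rwa [shf_shf ε ε p, ← two_mul]
  have h₂ : shf ε (shf ε p) ≤ shf (2 * ε) p := by rw [shf_shf, ← two_mul]
  refine ⟨M.map h₂ (g (shf ε p) n), ?_⟩
  rw [← LinearMap.comp_apply (f _), H.nat_f h₂ (shf_mono h₂), LinearMap.comp_apply,
    ← LinearMap.comp_apply (f _), H.fg _ h₁, ← LinearMap.comp_apply, ← N.map_comp]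

end Shift

section Blocks

/-- The first flag records a lower bound `a < x` on the blocks of a type, the second an upper
bound `y < b`. -/
def BlockType.bounds : BlockType → Bool × Bool
  | .o => (true, true)
  | .co => (false, true)
  | .oc => (true, false)
  | .c => (false, false)

lemma BlockType.bounds_injective : Function.Injective BlockType.bounds := by
  intro τ σ h
  cases τ <;> cases σ <;> first | rfl | cases h

def IsBoundedLeft (J : Set RopR) : Prop := ∃ a : ℝ, ∀ p ∈ J, a < p.x

def IsBoundedAbove (J : Set RopR) : Prop := ∃ b : ℝ, ∀ p ∈ J, p.y < b

def IsUnboundedLeft (J : Set RopR) : Prop := ∀ p ∈ J, ∀ x ≤ p.x, (⟨x, p.y⟩ : RopR) ∈ J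

def IsUnboundedAbove (J : Set RopR) : Prop := ∀ p ∈ J, ∀ y ≥ p.y, (⟨p.x, y⟩ : RopR) ∈ J

variable {τ : BlockType} {J : Set RopR}

lemma IsBlockOfType.isBoundedLeft (h : IsBlockOfType τ J) (hτ : τ.bounds.1 = true) :
    IsBoundedLeft J := by
  cases τ with
  | o => obtain ⟨a, b, -, rfl⟩ := h; exact ⟨a, fun p hp => hp.2.1⟩
  | oc => obtain ⟨a, t, -, -, rfl⟩ := h; exact ⟨a, fun p hp => hp.2.1⟩
  | co | c => cases hτ

lemma IsBlockOfType.isBoundedAbove (h : IsBlockOfType τ J) (hτ : τ.bounds.2 = true) :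
    IsBoundedAbove J := by
  cases τ with
  | o => obtain ⟨a, b, -, rfl⟩ := h; exact ⟨b, fun p hp => hp.2.2⟩
  | co => obtain ⟨s, b, -, -, rfl⟩ := h; exact ⟨b, fun p hp => hp.2.2⟩
  | oc | c => cases hτ

lemma IsBlockOfType.isUnboundedLeft (h : IsBlockOfType τ J) (hτ : τ.bounds.1 = false) :
    IsUnboundedLeft J := by
  cases τ with
  | co =>
    obtain ⟨s, b, -, -, rfl⟩ := h
    exact fun p hp x hx => ⟨hx.trans hp.1, hp.2.1, hp.2.2⟩
  | c =>
    obtain ⟨s, t, -, -, rfl⟩ := h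
    exact fun p hp x hx => ⟨hx.trans hp.1, (EReal.coe_le_coe_iff.2 hx).trans hp.2.1, hp.2.2⟩
  | o | oc => cases hτ

lemma IsBlockOfType.isUnboundedAbove (h : IsBlockOfType τ J) (hτ : τ.bounds.2 = false) :
    IsUnboundedAbove J := by
  cases τ with
  | oc =>
    obtain ⟨a, t, -, -, rfl⟩ := h
    exact fun p hp y hy => ⟨hp.1.trans hy, hp.2.1, hp.2.2⟩
  | c =>
    obtain ⟨s, t, -, -, rfl⟩ := h
    exact fun p hp y hy => ⟨hp.1.trans hy, hp.2.1, hp.2.2.trans (EReal.coe_le_coe_iff.2 hy)⟩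
  | o | co => cases hτ

variable {B C : Set RopR} {ε : ℝ} {p : RopR}

lemma exists_escape_of_isBoundedLeft (hB : IsBoundedLeft B) (hC : IsUnboundedLeft C)
    (hpB : p ∈ B) (hpC : shf ε p ∈ C) : ∃ r, p ≤ r ∧ shf ε r ∈ C ∧ r ∉ B := by
  obtain ⟨a, ha⟩ := hB
  have hap := ha p hpB
  refine ⟨⟨a, p.y⟩, ⟨hap.le, le_rfl⟩, hC _ hpC (a - ε) ?_, fun hr => (ha _ hr).false⟩
  simp only [shf]
  linarith

lemma exists_escape_of_isBoundedAbove (hB : IsBoundedAbove B) (hC : IsUnboundedAbove C)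
    (hpB : p ∈ B) (hpC : shf ε p ∈ C) : ∃ r, p ≤ r ∧ shf ε r ∈ C ∧ r ∉ B := by
  obtain ⟨b, hb⟩ := hB
  have hpb := hb p hpB
  refine ⟨⟨p.x, b⟩, ⟨le_rfl, hpb.le⟩, hC _ hpC (b + ε) ?_, fun hr => (hb _ hr).false⟩
  simp only [shf]
  linarith

theorem ivHom_eq_zero_of_not_bounds_le {σ : BlockType} (hτσ : ¬τ.bounds ≤ σ.bounds)
    (hB : IsBlockOfType τ B) (hC : IsBlockOfType σ C)
    (u : ∀ p, (PLift (p ∈ B) → K) →ₗ[K] (PLift (shf ε p ∈ C) → K))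
    (hu : ∀ {p q}, p ≤ q → u q ∘ₗ ivMap K B p q = ivMap K C (shf ε p) (shf ε q) ∘ₗ u p)
    (p : RopR) : u p = 0 := by
  refine ivHom_eq_zero_of_escape u hu fun hpB hpC => ?_
  simp only [Prod.le_def, not_and_or, not_le, Bool.lt_iff] at hτσ
  rcases hτσ with ⟨hσ, hτ⟩ | ⟨hσ, hτ⟩
  · exact exists_escape_of_isBoundedLeft (hB.isBoundedLeft hτ) (hC.isUnboundedLeft hσ) hpB hpC
  · exact exists_escape_of_isBoundedAbove (hB.isBoundedAbove hτ) (hC.isUnboundedAbove hσ) hpB hpC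

theorem ivHom_comp_eq_zero_of_ne {σ : BlockType} (hne : τ ≠ σ) {B' : Set RopR}
    (hB : IsBlockOfType τ B) (hC : IsBlockOfType σ C) (hB' : IsBlockOfType τ B')
    (u : ∀ p, (PLift (p ∈ B) → K) →ₗ[K] (PLift (shf ε p ∈ C) → K))
    (v : ∀ p, (PLift (p ∈ C) → K) →ₗ[K] (PLift (shf ε p ∈ B') → K))
    (hu : ∀ {p q}, p ≤ q → u q ∘ₗ ivMap K B p q = ivMap K C (shf ε p) (shf ε q) ∘ₗ u p)
    (hv : ∀ {p q}, p ≤ q → v q ∘ₗ ivMap K C p q = ivMap K B' (shf ε p) (shf ε q) ∘ₗ v p)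
    (p : RopR) : v (shf ε p) ∘ₗ u p = 0 := by
  have hbounds : ¬τ.bounds ≤ σ.bounds ∨ ¬σ.bounds ≤ τ.bounds := by
    by_contra! h
    exact hne (BlockType.bounds_injective (le_antisymm h.1 h.2))
  rcases hbounds with h | h
  · rw [ivHom_eq_zero_of_not_bounds_le h hB hC u hu p, LinearMap.comp_zero]
  · rw [ivHom_eq_zero_of_not_bounds_le h hC hB' v hv (shf ε p), LinearMap.zero_comp]

theorem DecompOver.comp_eq_zero_of_ne {σ : BlockType} (hne : τ ≠ σ) {M N : PersMod K RopR}
    (DM : DecompOver (IsBlockOfType τ) M) (DN : DecompOver (IsBlockOfType σ) N)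
    {u : ∀ p, M.V p →ₗ[K] N.V (shf ε p)} {v : ∀ p, N.V p →ₗ[K] M.V (shf ε p)}
    (hu : IsNatural shf ε M N u) (hv : IsNatural shf ε N M v) (p : RopR) :
    v (shf ε p) ∘ₗ u p = 0 := by
  classical
  refine comp_eq_zero_of_linearEntry_comp_eq_zero (DM.equiv p) (DN.equiv (shf ε p))
    (DM.equiv (shf ε (shf ε p))) fun i j k => ?_
  exact ivHom_comp_eq_zero_of_ne hne (DM.mem i) (DN.mem j) (DM.mem k)
    (fun q => linearEntry (DM.equiv q) (DN.equiv (shf ε q)) (u q) i j)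
    (fun q => linearEntry (DN.equiv q) (DM.equiv (shf ε q)) (v q) j k)
    (fun h => DM.linearEntry_comp_ivMap DN h (shf_mono h) (hu h (shf_mono h)) i j)
    (fun h => DN.linearEntry_comp_ivMap DM h (shf_mono h) (hv h (shf_mono h)) j k) p

end Blocks

theorem interleaving_respects_type_decomposition_general
    (K : Type) [Field K] (ε : ℝ)
    (Mf Nf : BlockType → PersMod K RopR)
    (DM : ∀ τ, DecompOver (IsBlockOfType τ) (Mf τ))
    (DN : ∀ τ, DecompOver (IsBlockOfType τ) (Nf τ))
    (f : ∀ p, (piMod Mf).V p →ₗ[K] (piMod Nf).V (shf ε p))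
    (g : ∀ p, (piMod Nf).V p →ₗ[K] (piMod Mf).V (shf ε p))
    (hfg : IsInterleaving shf ε (piMod Mf) (piMod Nf) f g) :
    ∀ τ : BlockType,
      IsInterleaving shf ε (Mf τ) (Nf τ) (comp2 Mf Nf f τ τ) (comp2 Nf Mf g τ τ) ∧
      KerTrivialSh shf ε (2 * ε) (Mf τ) (Nf τ) (comp2 Mf Nf f τ τ) ∧
      CokerTrivialSh shf ε (2 * ε) (Mf τ) (Nf τ) (comp2 Mf Nf f τ τ) ∧
      KerTrivialSh shf ε (2 * ε) (Nf τ) (Mf τ) (comp2 Nf Mf g τ τ) ∧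
      CokerTrivialSh shf ε (2 * ε) (Nf τ) (Mf τ) (comp2 Nf Mf g τ τ) := by
  intro τ
  have H := hfg.component τ
    (fun σ hσ => (DM τ).comp_eq_zero_of_ne hσ.symm (DN σ)
      (IsNatural.component hfg.nat_f τ σ) (IsNatural.component hfg.nat_g σ τ))
    (fun σ hσ => (DN τ).comp_eq_zero_of_ne hσ.symm (DM σ)
      (IsNatural.component hfg.nat_g τ σ) (IsNatural.component hfg.nat_f σ τ))
  exact ⟨H, H.kerTrivialSh, H.cokerTrivialSh, H.symm.kerTrivialSh, H.symm.cokerTrivialSh⟩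

/-- If `(f, g)` is an `ε`-interleaving pair between block decomposable modules
`M = M^o ⊕ M^co ⊕ M^oc ⊕ M^c` and `N = N^o ⊕ N^co ⊕ N^oc ⊕ N^c`, then for each
type `⋆`, `(f^{⋆,⋆}, g^{⋆,⋆})` is an `ε`-interleaving pair between `M^⋆` and `N^⋆`;
in particular `f^{⋆,⋆}` and `g^{⋆,⋆}` have `2ε`-trivial kernel and cokernel. -/
theorem interleaving_respects_type_decomposition
    (K : Type) [Field K] (ε : ℝ) (hε : 0 ≤ ε)
    (Mf Nf : BlockType → PersMod K RopR)
    (hMpfd : ∀ τ, (Mf τ).pfd) (hNpfd : ∀ τ, (Nf τ).pfd)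
    (DM : ∀ τ, DecompOver (IsBlockOfType τ) (Mf τ))
    (DN : ∀ τ, DecompOver (IsBlockOfType τ) (Nf τ))
    (f : ∀ p, (piMod Mf).V p →ₗ[K] (piMod Nf).V (shf ε p))
    (g : ∀ p, (piMod Nf).V p →ₗ[K] (piMod Mf).V (shf ε p))
    (hfg : IsInterleaving shf ε (piMod Mf) (piMod Nf) f g) :
    ∀ τ : BlockType,
      IsInterleaving shf ε (Mf τ) (Nf τ) (comp2 Mf Nf f τ τ) (comp2 Nf Mf g τ τ) ∧
      KerTrivialSh shf ε (2 * ε) (Mf τ) (Nf τ) (comp2 Mf Nf f τ τ) ∧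
      CokerTrivialSh shf ε (2 * ε) (Mf τ) (Nf τ) (comp2 Mf Nf f τ τ) ∧
      KerTrivialSh shf ε (2 * ε) (Nf τ) (Mf τ) (comp2 Nf Mf g τ τ) ∧
      CokerTrivialSh shf ε (2 * ε) (Nf τ) (Mf τ) (comp2 Nf Mf g τ τ) :=
  interleaving_respects_type_decomposition_general K ε Mf Nf DM DN f g hfg

end PersStab
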